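/- Let G = ⟨N, E, l⟩ be a finite labeled directed graph, let G↓ = ⟨N↓, E↓, l↓⟩ be its quotient graph by bisimilarity, and let G' = ⟨N', E', l'⟩ be a finite labeled directed graph bisimilar to G with |N'| = |N↓|. Then G' is isomorphic to G↓: there is a bijection φ : N' → N↓ such that l↓(φ(n')) = l'(n') for every n' ∈ N', and (m', n') ∈ E' if and only if (φ(m'), φ(n')) ∈ E↓. Hence the smallest graph bisimilar to G is unique up to isomorphism. -/

import Mathlib

/-- A labeled directed graph: a directed edge relation and a node labeling. -/
structure LGraph (V : Type*) (L : Type*) where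
  edge : V → V → Prop
  label : V → L

/-- `R` is a bisimulation between `G₁` and `G₂`. -/
def IsBisim {V₁ V₂ L : Type*} (G₁ : LGraph V₁ L) (G₂ : LGraph V₂ L)
    (R : V₁ → V₂ → Prop) : Prop :=
  ∀ n₁ n₂, R n₁ n₂ →
    G₁.label n₁ = G₂.label n₂ ∧
    (∀ c₁, G₁.edge n₁ c₁ → ∃ c₂, G₂.edge n₂ c₂ ∧ R c₁ c₂) ∧
    (∀ c₂, G₂.edge n₂ c₂ → ∃ c₁, G₁.edge n₁ c₁ ∧ R c₁ c₂)

/-- Nodes are bisimilar iff some bisimulation relates them. -/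
def Bisimilar {V₁ V₂ L : Type*} (G₁ : LGraph V₁ L) (G₂ : LGraph V₂ L)
    (n₁ : V₁) (n₂ : V₂) : Prop :=
  ∃ R, IsBisim G₁ G₂ R ∧ R n₁ n₂


/-- The quotient graph `G↓` of `G` by bisimilarity: nodes are the bisimilarity
equivalence classes, the label of a class is the common label of its members,
and there is an edge from class `C` to class `D` iff some node in `C` has a
child in `D`. -/
def quotGraph {V L : Type*} (G : LGraph V L) : LGraph (Quot (Bisimilar G G)) L where
  edge := fun C D => ∃ m n, Quot.mk (Bisimilar G G) m = C ∧
    Quot.mk (Bisimilar G G) n = D ∧ G.edge m n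
  label := Quot.lift G.label (fun a b hab =>
    (hab.choose_spec.1 a b hab.choose_spec.2).1)

/-- The graphs `G₁` and `G₂` are bisimilar: every node of `G₁` is bisimilar to
some node of `G₂` and vice versa. -/
def GraphBisimilar {V₁ V₂ L : Type*} (G₁ : LGraph V₁ L) (G₂ : LGraph V₂ L) : Prop :=
  (∀ n₁, ∃ n₂, Bisimilar G₁ G₂ n₁ n₂) ∧ (∀ n₂, ∃ n₁, Bisimilar G₁ G₂ n₁ n₂)

/-!
The quotient `G↓` is bisimilar to `G` (each node to its class) and is reduced: bisimilar classes
are equal. Choosing for every node of `G'` a bisimilar class gives a map `G' → G↓` which, because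
`G↓` is reduced, preserves labels and edges and is surjective; with `|N'| = |N↓|` it is bijective,
and injectivity lets it reflect edges as well.
-/

namespace Bisimilar

variable {V V₁ V₂ V₃ L : Type*} {G₁ : LGraph V₁ L} {G₂ : LGraph V₂ L} {G₃ : LGraph V₃ L}
  {a : V₁} {b : V₂}

theorem refl (G : LGraph V L) (n : V) : Bisimilar G G n n :=
  ⟨Eq, by rintro m _ rfl; exact ⟨rfl, fun c hc => ⟨c, hc, rfl⟩, fun c hc => ⟨c, hc, rfl⟩⟩, rfl⟩

theorem symm (h : Bisimilar G₁ G₂ a b) : Bisimilar G₂ G₁ b a := by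
  obtain ⟨R, hR, hab⟩ := h
  refine ⟨fun y x => R x y, fun y x hxy => ?_, hab⟩
  obtain ⟨hlabel, hforth, hback⟩ := hR x y hxy
  exact ⟨hlabel.symm, hback, hforth⟩

theorem trans {c : V₃} (h₁ : Bisimilar G₁ G₂ a b) (h₂ : Bisimilar G₂ G₃ b c) :
    Bisimilar G₁ G₃ a c := by
  obtain ⟨R, hR, hab⟩ := h₁
  obtain ⟨S, hS, hbc⟩ := h₂
  refine ⟨fun x z => ∃ y, R x y ∧ S y z, ?_, b, hab, hbc⟩
  rintro x z ⟨y, hxy, hyz⟩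
  obtain ⟨hlabelR, hforthR, hbackR⟩ := hR x y hxy
  obtain ⟨hlabelS, hforthS, hbackS⟩ := hS y z hyz
  refine ⟨hlabelR.trans hlabelS, fun c₁ hc₁ => ?_, fun c₃ hc₃ => ?_⟩
  · obtain ⟨c₂, hc₂, hRc⟩ := hforthR c₁ hc₁
    obtain ⟨c₃, hc₃, hSc⟩ := hforthS c₂ hc₂
    exact ⟨c₃, hc₃, c₂, hRc, hSc⟩
  · obtain ⟨c₂, hc₂, hSc⟩ := hbackS c₃ hc₃
    obtain ⟨c₁, hc₁, hRc⟩ := hbackR c₂ hc₂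
    exact ⟨c₁, hc₁, c₂, hRc, hSc⟩

theorem equivalence (G : LGraph V L) : Equivalence (Bisimilar G G) :=
  ⟨refl G, symm, trans⟩

theorem label_eq (h : Bisimilar G₁ G₂ a b) : G₁.label a = G₂.label b :=
  let ⟨_, hR, hab⟩ := h
  (hR a b hab).1

theorem exists_edge_of_edge_left (h : Bisimilar G₁ G₂ a b) {c : V₁} (hc : G₁.edge a c) :
    ∃ d, G₂.edge b d ∧ Bisimilar G₁ G₂ c d :=
  let ⟨R, hR, hab⟩ := h
  let ⟨d, hd, hcd⟩ := (hR a b hab).2.1 c hc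
  ⟨d, hd, R, hR, hcd⟩

theorem exists_edge_of_edge_right (h : Bisimilar G₁ G₂ a b) {d : V₂} (hd : G₂.edge b d) :
    ∃ c, G₁.edge a c ∧ Bisimilar G₁ G₂ c d :=
  let ⟨c, hc, hdc⟩ := h.symm.exists_edge_of_edge_left hd
  ⟨c, hc, hdc.symm⟩

end Bisimilar

theorem GraphBisimilar.trans {V₁ V₂ V₃ L : Type*} {G₁ : LGraph V₁ L} {G₂ : LGraph V₂ L}
    {G₃ : LGraph V₃ L} (h₁ : GraphBisimilar G₁ G₂) (h₂ : GraphBisimilar G₂ G₃) :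
    GraphBisimilar G₁ G₃ := by
  refine ⟨fun a => ?_, fun c => ?_⟩
  · obtain ⟨b, hab⟩ := h₁.1 a
    obtain ⟨c, hbc⟩ := h₂.1 b
    exact ⟨c, hab.trans hbc⟩
  · obtain ⟨b, hbc⟩ := h₂.2 c
    obtain ⟨a, hab⟩ := h₁.2 b
    exact ⟨a, hab.trans hbc⟩

def LGraph.IsReduced {V L : Type*} (G : LGraph V L) : Prop :=
  ∀ a b, Bisimilar G G a b → a = b

section ReducedTarget

variable {V₁ V₂ L : Type*} {G₁ : LGraph V₁ L} {G₂ : LGraph V₂ L} {φ : V₂ → V₁}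

theorem LGraph.IsReduced.eq_of_bisimilar (hG₁ : G₁.IsReduced) {a b : V₁} {n : V₂}
    (ha : Bisimilar G₁ G₂ a n) (hb : Bisimilar G₁ G₂ b n) : a = b :=
  hG₁ a b (ha.trans hb.symm)

theorem LGraph.IsReduced.edge_of_edge (hG₁ : G₁.IsReduced)
    (hφ : ∀ n, Bisimilar G₁ G₂ (φ n) n) {m n : V₂} (hmn : G₂.edge m n) :
    G₁.edge (φ m) (φ n) := by
  obtain ⟨c, hc, hcn⟩ := (hφ m).exists_edge_of_edge_right hmn
  rwa [hG₁.eq_of_bisimilar hcn (hφ n)] at hc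

theorem LGraph.IsReduced.edge_of_edge_of_injective (hG₁ : G₁.IsReduced)
    (hφ : ∀ n, Bisimilar G₁ G₂ (φ n) n) (hinj : Function.Injective φ) {m n : V₂}
    (hmn : G₁.edge (φ m) (φ n)) : G₂.edge m n := by
  obtain ⟨c, hc, hnc⟩ := (hφ m).exists_edge_of_edge_left hmn
  rwa [hinj (hG₁.eq_of_bisimilar (hφ c) hnc)] at hc

theorem LGraph.IsReduced.surjective (hG₁ : G₁.IsReduced) (hφ : ∀ n, Bisimilar G₁ G₂ (φ n) n)
    (hsurj : ∀ a, ∃ n, Bisimilar G₁ G₂ a n) : Function.Surjective φ := fun a =>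
  let ⟨n, han⟩ := hsurj a
  ⟨n, hG₁.eq_of_bisimilar (hφ n) han⟩

end ReducedTarget

section Quotient

variable {V L : Type*} {G : LGraph V L}

theorem quot_mk_eq_iff {a b : V} :
    Quot.mk (Bisimilar G G) a = Quot.mk (Bisimilar G G) b ↔ Bisimilar G G a b :=
  ⟨fun h => (Bisimilar.equivalence G).eqvGen_iff.mp (Quot.eqvGen_exact h), Quot.sound⟩

theorem bisimilar_quotGraph_mk (a : V) :
    Bisimilar (quotGraph G) G (Quot.mk (Bisimilar G G) a) a := by
  refine ⟨fun C a => C = Quot.mk _ a, ?_, rfl⟩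
  rintro _ a rfl
  refine ⟨rfl, ?_, fun c hc => ⟨_, ⟨a, c, rfl, rfl, hc⟩, rfl⟩⟩
  rintro _ ⟨m, n, hm, rfl, hmn⟩
  obtain ⟨c, hc, hnc⟩ := (quot_mk_eq_iff.mp hm).exists_edge_of_edge_left hmn
  exact ⟨c, hc, quot_mk_eq_iff.mpr hnc⟩

theorem graphBisimilar_quotGraph (G : LGraph V L) : GraphBisimilar (quotGraph G) G :=
  ⟨Quot.ind fun a => ⟨a, bisimilar_quotGraph_mk a⟩, fun a => ⟨_, bisimilar_quotGraph_mk a⟩⟩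

theorem quotGraph_isReduced (G : LGraph V L) : (quotGraph G).IsReduced := by
  rintro ⟨a⟩ ⟨b⟩ hab
  exact Quot.sound <|
    (bisimilar_quotGraph_mk a).symm.trans (hab.trans (bisimilar_quotGraph_mk b))

end Quotient

theorem smallest_bisimilar_graph_unique_general {V V' L : Type*} [Fintype V']
    (G : LGraph V L) (G' : LGraph V' L) (h : GraphBisimilar G G')
    (hcard : Nat.card V' = Nat.card (Quot (Bisimilar G G))) :
    ∃ φ : V' → Quot (Bisimilar G G), Function.Bijective φ ∧
      (∀ n', (quotGraph G).label (φ n') = G'.label n') ∧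
      (∀ m' n', G'.edge m' n' ↔ (quotGraph G).edge (φ m') (φ n')) := by
  have hQ : GraphBisimilar (quotGraph G) G' := (graphBisimilar_quotGraph G).trans h
  have hred := quotGraph_isReduced G
  choose φ hφ using hQ.2
  have hbij : Function.Bijective φ :=
    (Nat.bijective_iff_surjective_and_card φ).mpr ⟨hred.surjective hφ hQ.1, hcard⟩
  exact ⟨φ, hbij, fun n' => (hφ n').label_eq, fun m' n' =>
    ⟨hred.edge_of_edge hφ, hred.edge_of_edge_of_injective hφ hbij.1⟩⟩

/-- If `G'` is bisimilar to `G` and has exactly as many nodes as the quotient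
graph `G↓` of `G`, then `G'` is isomorphic to `G↓`: there is a bijection
between their node sets preserving labels and preserving and reflecting edges.
Hence the smallest graph bisimilar to `G` is unique up to isomorphism. -/
theorem smallest_bisimilar_graph_unique {V V' L : Type*} [Fintype V] [Fintype V']
    (G : LGraph V L) (G' : LGraph V' L) (h : GraphBisimilar G G')
    (hcard : Nat.card V' = Nat.card (Quot (Bisimilar G G))) :
    ∃ φ : V' → Quot (Bisimilar G G), Function.Bijective φ ∧
      (∀ n', (quotGraph G).label (φ n') = G'.label n') ∧
      (∀ m' n', G'.edge m' n' ↔ (quotGraph G).edge (φ m') (φ n')) :=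
  smallest_bisimilar_graph_unique_general G G' h hcard
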